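/- arXiv:2411.15364 — 5 statements merged into one kernel-verified Lean document; each statement's English description precedes it below -/
import Mathlib

section
/- For every countable indexed collection C = {L_1, L_2, ...} of infinite languages over U, there exists a generating algorithm such that for every index i* and every enumeration of L_{i*} presented as input, the algorithm's output z_t belongs to L_{i*} \ S_t for all t satisfying |S_t| ≥ max(i*, m_C(L_{i*}) + 1). -/
/-!
STATEMENT 1: For every countable indexed collection C = {L_0, L_1, ...} of infinite
languages over U, there is a generating algorithm such that for every index i and every
enumeration of L_i presented as input, the output z_t belongs to L_i \ S_t for all t
with |S_t| ≥ max(i+1, m_C(L_i) + 1).  (Indices here are 0-based, so the language at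
index `i` is the (i+1)-st language of the collection, whence the bound `i + 1`.)
-/

/-- `x` is an enumeration of the language `K`. -/
def IsEnumerationOf {U : Type} (K : Set U) (x : ℕ → U) : Prop :=
  (∀ t, x t ∈ K) ∧ ∀ w ∈ K, ∃ t, x t = w

/-- The set `S_t` of distinct strings among the first `t` inputs. -/
def seen {U : Type} (x : ℕ → U) (t : ℕ) : Set U := x '' {i | i < t}

/-- The input prefix `(x_1, ..., x_t)` as a list. -/
def inputList {U : Type} (x : ℕ → U) (t : ℕ) : List U :=
  List.ofFn (fun i : Fin t => x i)

/-- The non-uniform complexity `m_C(L_i)`: the maximum cardinality of a finite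
intersection `⋂_{L ∈ C'} L` over subcollections `C'` of the first `i+1` languages that
contain `L_i`; the supremum of the empty set of values is `0`. -/
noncomputable def mC {U : Type} (L : ℕ → Set U) (i : ℕ) : ℕ :=
  sSup {n : ℕ | ∃ I : Finset ℕ, (∀ j ∈ I, j ≤ i) ∧ i ∈ I ∧
    (⋂ j ∈ I, L j).Finite ∧ n = (⋂ j ∈ I, L j).ncard}
/-!
The generator looks at the set `S` of strings seen so far and, for each level `k`, at the
intersection of those `L j`, `j ≤ k`, that contain `S`. It takes the highest level `k < |S|`
at which this intersection is still infinite and outputs a fresh element of it. For the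
target `L i`, the intersection at level `i` contains `S` and is one of the intersections
bounding `m_C(L i)`, so once `|S| > m_C(L i)` it must be infinite. Once also `|S| > i`, the
chosen level is at least `i`, and the chosen intersection has `L i` among its factors.
-/

section

variable {U : Type} (L : ℕ → Set U)

def consistentCore (S : Set U) (k : ℕ) : Set U :=
  ⋂ (j) (_ : j ≤ k ∧ S ⊆ L j), L j

variable {L}

lemma subset_consistentCore (S : Set U) (k : ℕ) : S ⊆ consistentCore L S k := by
  intro a ha
  simp only [consistentCore, Set.mem_iInter]
  exact fun j hj => hj.2 ha

lemma consistentCore_subset {S : Set U} {i k : ℕ} (hik : i ≤ k) (hS : S ⊆ L i) :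
    consistentCore L S k ⊆ L i :=
  Set.biInter_subset_of_mem (t := fun j => L j) (⟨hik, hS⟩ : i ≤ k ∧ S ⊆ L i)

open Classical in
lemma consistentCore_eq_biInter (S : Set U) (k : ℕ) :
    consistentCore L S k = ⋂ j ∈ (Finset.range (k + 1)).filter (fun j => S ⊆ L j), L j := by
  simp [consistentCore]

lemma ncard_biInter_le_mC {i : ℕ} {I : Finset ℕ} (hI : ∀ j ∈ I, j ≤ i) (hiI : i ∈ I)
    (hfin : (⋂ j ∈ I, L j).Finite) : (⋂ j ∈ I, L j).ncard ≤ mC L i := by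
  refine le_csSup (Set.Finite.bddAbove ?_) ⟨I, hI, hiI, hfin, rfl⟩
  refine ((Finset.range (i + 1)).powerset.finite_toSet.image
    fun J : Finset ℕ => (⋂ j ∈ J, L j).ncard).subset ?_
  rintro n ⟨J, hJ, -, -, rfl⟩
  exact ⟨J, Finset.mem_powerset.2 fun j hj => Finset.mem_range.2 (Nat.lt_succ_of_le (hJ j hj)),
    rfl⟩

lemma consistentCore_infinite {S : Set U} {i : ℕ} (hS : S ⊆ L i) (hm : mC L i < S.ncard) :
    (consistentCore L S i).Infinite := by
  classical
  intro hfin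
  have hS_le := Set.ncard_le_ncard (subset_consistentCore S i) hfin
  rw [consistentCore_eq_biInter] at hfin hS_le
  have hcore_le := ncard_biInter_le_mC (L := L) (i := i)
    (I := (Finset.range (i + 1)).filter (fun j => S ⊆ L j))
    (by intro j hj; simp at hj; omega) (by simpa using hS) hfin
  omega

variable (L)

open Classical in
noncomputable def coreIndex (S : Set U) : ℕ :=
  Nat.findGreatest (fun k => (consistentCore L S k).Infinite) (S.ncard - 1)

noncomputable def coreGenerator [Nonempty U] (S : Set U) : U :=
  Classical.epsilon (· ∈ consistentCore L S (coreIndex L S) \ S)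

variable {L}

open Classical in
lemma le_coreIndex {S : Set U} {i : ℕ} (hi : i < S.ncard)
    (hinf : (consistentCore L S i).Infinite) : i ≤ coreIndex L S :=
  Nat.le_findGreatest (by omega) hinf

open Classical in
lemma consistentCore_coreIndex_infinite {S : Set U} {i : ℕ} (hi : i < S.ncard)
    (hinf : (consistentCore L S i).Infinite) : (consistentCore L S (coreIndex L S)).Infinite :=
  Nat.findGreatest_spec (P := fun k => (consistentCore L S k).Infinite) (by omega) hinf

theorem coreGenerator_mem [Nonempty U] {S : Set U} {i : ℕ} (hS : S ⊆ L i) (hSfin : S.Finite)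
    (hi : i < S.ncard) (hm : mC L i < S.ncard) : coreGenerator L S ∈ L i \ S := by
  have hinf : (consistentCore L S i).Infinite := consistentCore_infinite hS hm
  have hfresh : (consistentCore L S (coreIndex L S) \ S).Nonempty :=
    ((consistentCore_coreIndex_infinite hi hinf).sdiff hSfin).nonempty
  obtain ⟨hcore, hnew⟩ := Classical.epsilon_spec hfresh
  exact ⟨consistentCore_subset (le_coreIndex hi hinf) hS hcore, hnew⟩

end

lemma seen_eq_setOf_mem_inputList {U : Type} (x : ℕ → U) (t : ℕ) :
    seen x t = {a | a ∈ inputList x t} := by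
  ext a
  simp [seen, inputList, List.mem_ofFn, Fin.exists_iff]

theorem nonuniform_generation_with_complexity_bound_general
    (U : Type) [Infinite U]
    (L : ℕ → Set U) :
    ∃ A : List U → U, ∀ i : ℕ,
      ∀ x : ℕ → U, IsEnumerationOf (L i) x →
        ∀ t : ℕ, max (i + 1) (mC L i + 1) ≤ (seen x t).ncard →
          A (inputList x t) ∈ L i \ seen x t := by
  refine ⟨fun l => coreGenerator L {a | a ∈ l}, fun i x hx t ht => ?_⟩
  have hseen : seen x t ⊆ L i := by
    rintro _ ⟨s, -, rfl⟩
    exact hx.1 s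
  rw [seen_eq_setOf_mem_inputList] at *
  exact coreGenerator_mem hseen (List.finite_toSet _) (by omega) (by omega)

theorem nonuniform_generation_with_complexity_bound
    (U : Type) [Countable U] [Infinite U]
    (L : ℕ → Set U) (hL : ∀ i, (L i).Infinite) :
    ∃ A : List U → U, ∀ i : ℕ,
      ∀ x : ℕ → U, IsEnumerationOf (L i) x →
        ∀ t : ℕ, max (i + 1) (mC L i + 1) ≤ (seen x t).ncard →
          A (inputList x t) ∈ L i \ seen x t :=
  nonuniform_generation_with_complexity_bound_general U L
end

section
/- Let U = ℤ, let L_∞ = ℤ and, for each i ∈ ℤ, let L_i = {n ∈ ℤ : n ≥ -i}, and let C = {L_∞} ∪ {L_i : i ∈ ℤ}. Then there is no probability space (Ω, μ) and Ω-indexed family of exhaustive generating algorithms (A_ω)_{ω ∈ Ω} (with the relevant events measurable) satisfying: for every K ∈ C and every enumeration of K, there exists t* < ∞ such that for every t ≥ t*, μ{ω : Z^ω_{≥t} \ K is finite} > 1/2 and μ{ω : S_t ∪ Z^ω_{<t} ∪ Z^ω_{≥t} ⊇ K} > 1/2. -/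
/-!
STATEMENT 4: For U = ℤ, L_∞ = ℤ, L_i = {n : ℤ | n ≥ -i} (i ∈ ℤ), and
C = {L_∞} ∪ {L_i : i ∈ ℤ}, there is no probability space (Ω, μ) and Ω-indexed family
of exhaustive generating algorithms (A_ω) (with the relevant events measurable) such
that: for every K ∈ C and every enumeration of K there exists t* < ∞ such that for
every t ≥ t*, μ{ω : Z^ω_{≥t} \ K finite} > 1/2 and
μ{ω : S_t ∪ Z^ω_{<t} ∪ Z^ω_{≥t} ⊇ K} > 1/2.
-/

open MeasureTheory

/-- `Z_{<t}`: the distinct strings among `G_1(1), ..., G_{t-1}(1)`. -/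
def ZltSet {U : Type} (A : List U → ℕ → U) (x : ℕ → U) (t : ℕ) : Set U :=
  (fun s => A (inputList x s) 0) '' {s | 1 ≤ s ∧ s < t}

/-- `Z_{≥t}`: the distinct strings in `G_t(1), G_t(2), ...`. -/
def ZgeSet {U : Type} (A : List U → ℕ → U) (x : ℕ → U) (t : ℕ) : Set U :=
  Set.range (A (inputList x t))

/-- The collection C = {L_∞} ∪ {L_i : i ∈ ℤ} with L_∞ = ℤ, L_i = {n ≥ -i}. -/
def Ccoll : Set (Set ℤ) :=
  insert (Set.univ : Set ℤ) (Set.range fun i : ℤ => {n : ℤ | -i ≤ n})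

/-!
Suppose such a randomized algorithm existed. Building the input adversarially, extend the
prefix at stage `k` by the `k`-th integer and then by an enumeration of some half-line
`L_j ⊇` everything shown so far, and keep feeding that enumeration until the validity
guarantee for `L_j` holds with probability `> 1/2`. The limit input enumerates `ℤ`, so its
completeness guarantee eventually holds with probability `> 1/2` as well; at a late stage
both events happen for some `ω`. Then `Z^ω_{≥t}` contains only finitely many points of the
infinite set `ℤ \ L_j`, while `S_t ∪ Z^ω_{<t} ∪ Z^ω_{≥t}` covers it and `S_t`, `Z^ω_{<t}`
are finite.
-/

open Set Filter

lemma isEnumerationOf_univ {U : Type} {e : ℕ → U} (he : Function.Surjective e) :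
    IsEnumerationOf univ e :=
  ⟨fun _ => trivial, fun w _ => he w⟩

lemma IsEnumerationOf.splice {U : Type} {K : Set U} {h : ℕ → U} (hh : IsEnumerationOf K h)
    {p : ℕ → U} {t : ℕ} (hp : ∀ n < t, p n ∈ K) :
    IsEnumerationOf K (fun n => if n < t then p n else h (n - t)) := by
  refine ⟨fun n => ?_, fun w hw => ?_⟩
  · dsimp only
    split_ifs with hn
    exacts [hp n hn, hh.1 _]
  · obtain ⟨k, rfl⟩ := hh.2 w hw
    exact ⟨t + k, by simp⟩

lemma inputList_congr {U : Type} {x y : ℕ → U} {t : ℕ} (h : ∀ n < t, x n = y n) :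
    inputList x t = inputList y t :=
  congrArg List.ofFn (funext fun j => h j j.2)

lemma ZgeSet_congr {U : Type} (A : List U → ℕ → U) {x y : ℕ → U} {t : ℕ}
    (h : ∀ n < t, x n = y n) : ZgeSet A x t = ZgeSet A y t := by
  rw [ZgeSet, ZgeSet, inputList_congr h]

lemma seen_finite {U : Type} (x : ℕ → U) (t : ℕ) : (seen x t).Finite :=
  (finite_Iio t).image x

lemma ZltSet_finite {U : Type} (A : List U → ℕ → U) (x : ℕ → U) (t : ℕ) :
    (ZltSet A x t).Finite :=
  ((finite_Iio t).subset fun _ hs => hs.2).image _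

lemma not_univ_subset_of_ZgeSet_diff_finite {U : Type} {A : List U → ℕ → U} {x : ℕ → U}
    {t : ℕ} {L : Set U} (hL : Lᶜ.Infinite) (hfin : (ZgeSet A x t \ L).Finite) :
    ¬ univ ⊆ seen x t ∪ ZltSet A x t ∪ ZgeSet A x t := by
  refine fun hcov => hL ((((seen_finite x t).union (ZltSet_finite A x t)).union hfin).subset ?_)
  intro n hn
  rcases hcov (mem_univ n) with hfirst | hZge
  exacts [Or.inl hfirst, Or.inr ⟨hZge, hn⟩]

lemma nonempty_inter_of_half_lt {Ω : Type*} [MeasurableSpace Ω] {μ : Measure Ω}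
    [IsProbabilityMeasure μ] {s t : Set Ω} (ht : MeasurableSet t) (hs : 1 / 2 < μ s)
    (ht' : 1 / 2 < μ t) : (s ∩ t).Nonempty :=
  nonempty_inter_of_measure_lt_add μ ht (subset_univ s) (subset_univ t) <| by
    rw [measure_univ, ← ENNReal.add_halves 1]
    exact ENNReal.add_lt_add hs ht'

section Diagonalization

variable {U : Type} {ι : Type*} {K : Set U} {L : ι → Set U} {P : ι → (ℕ → U) → ℕ → Prop}

lemma exists_forall_lt_eq_of_agree_succ {α : Type*} {τ : ℕ → ℕ} (hτ : StrictMono τ)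
    {F : ℕ → ℕ → α} (hF : ∀ k, ∀ n < τ k, F (k + 1) n = F k n) :
    ∃ X : ℕ → α, ∀ k, ∀ n < τ k, X n = F k n := by
  have hagree : ∀ k m, k ≤ m → ∀ n < τ k, F m n = F k n := by
    intro k m hkm n hn
    induction m, hkm using Nat.le_induction with
    | base => rfl
    | succ m hkm ih => rw [hF m n (hn.trans_le (hτ.monotone hkm)), ih]
  refine ⟨fun n => F (n + 1) n, fun k n hn => ?_⟩
  rcases le_total (n + 1) k with hk | hk
  · exact (hagree _ _ hk n (Nat.lt_of_succ_le (hτ.id_le (n + 1)))).symm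
  · exact hagree _ _ hk n hn

variable (L P) in
structure EnumerationStage where
  time : ℕ
  index : ι
  enum : ℕ → U
  isEnumerationOf : IsEnumerationOf (L index) enum
  prop : P index enum time

lemma exists_next_enumerationStage (hLK : ∀ i, L i ⊆ K)
    (hext : ∀ (p : ℕ → U) (t : ℕ), (∀ n < t, p n ∈ K) →
      ∃ j g, IsEnumerationOf (L j) g ∧ ∀ n < t, g n = p n)
    (hP : ∀ i f, IsEnumerationOf (L i) f → ∃ᶠ t in atTop, P i f t)
    (s : EnumerationStage L P) {w : U} (hw : w ∈ K) :
    ∃ s' : EnumerationStage L P, s.time < s'.time ∧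
      (∀ n < s.time, s'.enum n = s.enum n) ∧ s'.enum s.time = w := by
  classical
  have hprefix : ∀ n < s.time + 1, Function.update s.enum s.time w n ∈ K := by
    intro n _
    rcases eq_or_ne n s.time with rfl | hn
    · simpa using hw
    · simpa [hn] using hLK _ (s.isEnumerationOf.1 n)
  obtain ⟨j, g, hg, hgp⟩ := hext _ _ hprefix
  obtain ⟨t, ht, hPt⟩ := frequently_atTop.1 (hP j g hg) (s.time + 1)
  refine ⟨⟨t, j, g, hg, hPt⟩, ht, fun n hn => ?_, ?_⟩
  · simpa [hn.ne] using hgp n (hn.trans (Nat.lt_succ_self _))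
  · simpa using hgp s.time (Nat.lt_succ_self _)

/-- Gold's diagonalization: `X` is the limit of stages, each appending `e k` to the previous
prefix and then following an enumeration of some `L j` until `P` holds. -/
theorem exists_enumeration_frequently_prefix {e : ℕ → U} (he : IsEnumerationOf K e)
    (hLK : ∀ i, L i ⊆ K)
    (hext : ∀ (p : ℕ → U) (t : ℕ), (∀ n < t, p n ∈ K) →
      ∃ j g, IsEnumerationOf (L j) g ∧ ∀ n < t, g n = p n)
    (hP : ∀ i f, IsEnumerationOf (L i) f → ∃ᶠ t in atTop, P i f t) :
    ∃ X, IsEnumerationOf K X ∧ ∃ᶠ t in atTop, ∃ i f, (∀ n < t, f n = X n) ∧ P i f t := by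
  obtain ⟨i₀, f₀, hf₀, -⟩ := hext e 0 fun n hn => absurd hn n.not_lt_zero
  obtain ⟨t₀, -, ht₀⟩ := frequently_atTop.1 (hP i₀ f₀ hf₀) 0
  choose next hnext using fun k (s : EnumerationStage L P) =>
    exists_next_enumerationStage hLK hext hP s (he.1 k)
  let stage : ℕ → EnumerationStage L P := fun k => Nat.rec ⟨t₀, i₀, f₀, hf₀, ht₀⟩ next k
  have hstage : ∀ k, stage (k + 1) = next k (stage k) := fun _ => rfl
  have hmono : StrictMono fun k => (stage k).time :=
    strictMono_nat_of_lt_succ fun k => hstage k ▸ (hnext k _).1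
  obtain ⟨X, hX⟩ := exists_forall_lt_eq_of_agree_succ hmono
    (F := fun k => (stage k).enum) fun k n hn => hstage k ▸ (hnext k _).2.1 n hn
  refine ⟨X, ⟨fun n => ?_, fun w hw => ?_⟩, frequently_atTop.2 fun T => ?_⟩
  · rw [hX (n + 1) n (Nat.lt_of_succ_le (hmono.id_le (n + 1)))]
    exact hLK _ ((stage (n + 1)).isEnumerationOf.1 n)
  · obtain ⟨k, rfl⟩ := he.2 w hw
    refine ⟨(stage k).time, ?_⟩
    rw [hX (k + 1) _ (hmono (Nat.lt_succ_self k)), hstage k]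
    exact (hnext k _).2.2
  · exact ⟨(stage T).time, hmono.id_le T, (stage T).index, (stage T).enum,
      fun n hn => (hX T n hn).symm, (stage T).prop⟩

end Diagonalization

lemma Ici_neg_mem_Ccoll (i : ℤ) : Ici (-i) ∈ Ccoll :=
  Or.inr ⟨i, rfl⟩

lemma isEnumerationOf_Ici_add (m : ℤ) : IsEnumerationOf (Ici m) (fun n : ℕ => m + n) := by
  refine ⟨fun n => by simp, fun w hw => ⟨(w - m).toNat, ?_⟩⟩
  dsimp only
  rw [Int.toNat_of_nonneg (sub_nonneg.2 hw)]
  ring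

lemma exists_Ici_enumeration_prefix (p : ℕ → ℤ) (t : ℕ) :
    ∃ i g, IsEnumerationOf (Ici (-i)) g ∧ ∀ n < t, g n = p n := by
  obtain ⟨m, hm⟩ := ((finite_Iio t).image p).bddBelow
  refine ⟨-m, _, (isEnumerationOf_Ici_add (-(-m))).splice fun n hn => ?_, fun n hn => if_pos hn⟩
  rw [neg_neg]
  exact hm (mem_image_of_mem p hn)

theorem randomized_exhaustive_generation_lower_bound :
    ¬ ∃ (Ω : Type) (_ : MeasurableSpace Ω) (μ : Measure Ω)
        (_ : IsProbabilityMeasure μ) (A : Ω → List ℤ → ℕ → ℤ),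
      (∀ K ∈ Ccoll, ∀ x : ℕ → ℤ, ∀ t : ℕ,
        MeasurableSet {ω | (ZgeSet (A ω) x t \ K).Finite} ∧
        MeasurableSet {ω | K ⊆ seen x t ∪ ZltSet (A ω) x t ∪ ZgeSet (A ω) x t}) ∧
      (∀ K ∈ Ccoll, ∀ x : ℕ → ℤ, IsEnumerationOf K x →
        ∃ tstar : ℕ, ∀ t : ℕ, tstar ≤ t →
          (1 : ENNReal) / 2 < μ {ω | (ZgeSet (A ω) x t \ K).Finite} ∧
          (1 : ENNReal) / 2 <
            μ {ω | K ⊆ seen x t ∪ ZltSet (A ω) x t ∪ ZgeSet (A ω) x t}) := by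
  rintro ⟨Ω, _, μ, _, A, hmeas, hG⟩
  have hvalid : ∀ i f, IsEnumerationOf (Ici (-i)) f →
      ∃ᶠ t in atTop, 1 / 2 < μ {ω | (ZgeSet (A ω) f t \ Ici (-i)).Finite} := by
    intro i f hf
    obtain ⟨T, hT⟩ := hG _ (Ici_neg_mem_Ccoll i) f hf
    exact (eventually_atTop.2 ⟨T, fun t ht => (hT t ht).1⟩).frequently
  obtain ⟨X, hX, hlocked⟩ := exists_enumeration_frequently_prefix
    (isEnumerationOf_univ Equiv.intEquivNat.symm.surjective) (fun _ => subset_univ _)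
    (fun p t _ => exists_Ici_enumeration_prefix p t) hvalid
  obtain ⟨T, hT⟩ := hG univ (mem_insert _ _) X hX
  obtain ⟨t, ⟨i, f, hfX, hfvalid⟩, hcomplete⟩ :=
    (hlocked.and_eventually (eventually_atTop.2 ⟨T, fun t ht => (hT t ht).2⟩)).exists
  simp_rw [ZgeSet_congr _ hfX] at hfvalid
  obtain ⟨ω, hfin, hcov⟩ := nonempty_inter_of_half_lt (hmeas univ (mem_insert _ _) X t).2
    hfvalid hcomplete
  exact not_univ_subset_of_ZgeSet_diff_finite (by simpa using Iio_infinite (-i)) hfin hcov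
end

section
/- If a countable collection C = {L_1, L_2, ...} of infinite languages over U can be generated with breadth in the limit by some algorithm, then C satisfies Angluin's Condition with Existence. -/
/-- The algorithm `A` generates with breadth in the limit from the collection `C`. -/
def GeneratesWithBreadth {U : Type} (A : List U → ℕ → U) (C : Set (Set U)) : Prop :=
  ∀ K ∈ C, ∀ x : ℕ → U, IsEnumerationOf K x →
    ∃ tstar : ℕ, ∀ t : ℕ, tstar ≤ t → ZgeSet A x t = K

/-- Angluin's Condition with Existence. -/
def AngluinExistence {U : Type} (C : Set (Set U)) : Prop :=
  ∀ L ∈ C, ∃ T : Set U, T.Finite ∧ T ⊆ L ∧ ∀ L' ∈ C, T ⊆ L' → ¬ L' ⊂ L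

/-!
If Angluin's condition fails at `K ∈ C`, every finite list of elements of `K` lies in some
`L' ∈ C` with `L' ⊊ K`, so the generator can be driven to a wrong output `L' ≠ K` by extending the
list. Alternating such extensions with the next element of an enumeration of `K` builds an
enumeration of `K` on which the generator is wrong infinitely often, contradicting breadth.
-/

open Filter

section Enumerations

variable {α : Type}

theorem isEnumerationOf_iff {K : Set α} {x : ℕ → α} :
    IsEnumerationOf K x ↔ Set.range x = K := by
  simp only [IsEnumerationOf, Set.ext_iff, Set.mem_range]
  grind

theorem exists_isEnumerationOf [Countable α] {K : Set α} (hK : K.Nonempty) :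
    ∃ x, IsEnumerationOf K x := by
  obtain ⟨x, hx⟩ := K.to_countable.exists_eq_range hK
  exact ⟨x, isEnumerationOf_iff.2 hx.symm⟩

theorem inputList_eq_take (x : Stream' α) (t : ℕ) : inputList x t = x.take t :=
  List.ext_getElem (by simp [inputList]) fun i _ _ => by simp [inputList, Stream'.get]

theorem Stream'.range_append (p : List α) (z : Stream' α) :
    Set.range (p ++ₛ z) = {a | a ∈ p} ∪ Set.range z := by
  ext a
  simp only [Set.mem_union, Set.mem_ofPred_eq]
  constructor
  · rintro ⟨i, rfl⟩
    rcases lt_or_ge i p.length with hi | hi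
    · left
      show (p ++ₛ z).get i ∈ p
      exact Stream'.get_append_left i p z hi ▸ p.getElem_mem hi
    · obtain ⟨n, rfl⟩ := Nat.exists_eq_add_of_le hi
      exact .inr ⟨n, (Stream'.get_append_right n p z).symm⟩
  · rintro (ha | ⟨n, rfl⟩)
    · obtain ⟨i, hi⟩ := Stream'.mem_append_stream_left z ha
      exact ⟨i, hi.symm⟩
    · exact ⟨p.length + n, Stream'.get_append_right n p z⟩

theorem exists_inputList_eq_of_isPrefix_chain (P : ℕ → List α) (hP : ∀ n, P n <+: P (n + 1))
    (hlen : ∀ n, n ≤ (P n).length) : ∃ x : ℕ → α, ∀ n, inputList x (P n).length = P n := by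
  have hmono : ∀ ⦃m n⦄, m ≤ n → P m <+: P n := Nat.rel_of_forall_rel_succ_of_le _ hP
  refine ⟨fun k => (P (k + 1))[k]'(hlen (k + 1)), fun n => ?_⟩
  refine List.ext_getElem (by simp [inputList]) fun i _ hi => ?_
  simp only [inputList, List.getElem_ofFn]
  rcases le_total (i + 1) n with h | h
  · exact (hmono h).getElem _
  · exact ((hmono h).getElem hi).symm

theorem exists_isEnumerationOf_frequently {K : Set α} {Q : List α → Prop}
    (hK : ∃ e, IsEnumerationOf K e)
    (hext : ∀ p : List α, (∀ a ∈ p, a ∈ K) → ∃ q, p <+: q ∧ (∀ a ∈ q, a ∈ K) ∧ Q q) :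
    ∃ x, IsEnumerationOf K x ∧ ∃ᶠ t in atTop, Q (inputList x t) := by
  obtain ⟨e, he_mem, he_surj⟩ := hK
  have hstep (p : {p : List α // ∀ a ∈ p, a ∈ K}) (n : ℕ) :
      ∃ q : {q : List α // ∀ a ∈ q, a ∈ K}, p.1 ++ [e n] <+: q.1 ∧ Q q.1 := by
    obtain ⟨q, hpq, hqK, hQ⟩ :=
      hext (p.1 ++ [e n]) (List.forall_mem_append.2 ⟨p.2, by simpa using he_mem n⟩)
    exact ⟨⟨q, hqK⟩, hpq, hQ⟩
  choose ext hext_prefix hext_Q using hstep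
  -- Stage `n + 1` forces `e n` into the enumeration and then a prefix satisfying `Q`.
  let P : ℕ → {p : List α // ∀ a ∈ p, a ∈ K} :=
    fun n => Nat.rec ⟨[], by simp⟩ (fun n p => ext p n) n
  have hP (n : ℕ) : (P n).1 ++ [e n] <+: (P (n + 1)).1 := hext_prefix _ _
  have hlen (n : ℕ) : n ≤ (P n).1.length := by
    induction n with
    | zero => simp
    | succ n ih =>
      have := (hP n).length_le
      rw [List.length_append, List.length_singleton] at this
      omega
  obtain ⟨x, hx⟩ := exists_inputList_eq_of_isPrefix_chain (fun n => (P n).1)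
    (fun n => (List.prefix_append _ _).trans (hP n)) hlen
  have hmem_iff (n : ℕ) (a : α) : a ∈ (P n).1 ↔ ∃ i < (P n).1.length, x i = a := by
    conv_lhs => rw [← hx n, inputList, List.mem_ofFn]
    exact ⟨fun ⟨i, hi⟩ => ⟨i, i.2, hi⟩, fun ⟨i, hi, hia⟩ => ⟨⟨i, hi⟩, hia⟩⟩
  refine ⟨x, ⟨fun t => ?_, fun w hw => ?_⟩, frequently_atTop.2 fun N => ?_⟩
  · exact (P (t + 1)).2 _ ((hmem_iff (t + 1) _).2 ⟨t, hlen (t + 1), rfl⟩)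
  · obtain ⟨n, rfl⟩ := he_surj w hw
    obtain ⟨i, -, hi⟩ := (hmem_iff (n + 1) (e n)).1 ((hP n).subset (by simp))
    exact ⟨i, hi⟩
  · refine ⟨(P (N + 1)).1.length, (hlen (N + 1)).trans' N.le_succ, ?_⟩
    rw [hx (N + 1)]
    exact hext_Q _ _

end Enumerations

theorem GeneratesWithBreadth.exists_extension_range_ne {U : Type} [Countable U]
    {A : List U → ℕ → U} {C : Set (Set U)} (hA : GeneratesWithBreadth A C)
    (hC : ∀ S ∈ C, S.Nonempty) {K : Set U}
    (hK : ∀ T : Set U, T.Finite → T ⊆ K → ∃ L' ∈ C, T ⊆ L' ∧ L' ⊂ K)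
    {p : List U} (hp : ∀ a ∈ p, a ∈ K) :
    ∃ q, p <+: q ∧ (∀ a ∈ q, a ∈ K) ∧ Set.range (A q) ≠ K := by
  obtain ⟨L', hL'C, hpL', hL'K⟩ := hK {a | a ∈ p} p.finite_toSet hp
  obtain ⟨z, hz⟩ : ∃ z : Stream' U, IsEnumerationOf L' z := exists_isEnumerationOf (hC L' hL'C)
  have hx : IsEnumerationOf L' (p ++ₛ z) := isEnumerationOf_iff.2 <| by
    rw [Stream'.range_append, isEnumerationOf_iff.1 hz]
    exact Set.union_eq_right.2 hpL'
  obtain ⟨tstar, ht⟩ := hA L' hL'C _ hx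
  set t := max tstar p.length
  refine ⟨inputList (p ++ₛ z) t, ?_, fun a ha => ?_, ?_⟩
  · have := Stream'.take_prefix_take_left p.length t (p ++ₛ z) (le_max_right _ _)
    rwa [Stream'.take_append_of_le_length _ _ _ le_rfl, List.take_length,
      ← inputList_eq_take] at this
  · obtain ⟨i, rfl⟩ := List.mem_ofFn.1 ha
    exact hL'K.subset (hx.1 i)
  · exact (ht t (le_max_left _ _)).trans_ne hL'K.ne

theorem breadth_implies_angluin_existence_general
    (U : Type) [Countable U]
    (L : ℕ → Set U) (hL : ∀ i, (L i).Infinite)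
    (h : ∃ A : List U → ℕ → U, GeneratesWithBreadth A (Set.range L)) :
    AngluinExistence (Set.range L) := by
  obtain ⟨A, hA⟩ := h
  intro K hK
  by_contra! hfail
  have hC : ∀ S ∈ Set.range L, S.Nonempty := by
    rintro _ ⟨i, rfl⟩
    exact (hL i).nonempty
  obtain ⟨x, hx, hfreq⟩ := exists_isEnumerationOf_frequently (exists_isEnumerationOf (hC K hK))
    fun p hp => hA.exists_extension_range_ne hC hfail hp
  obtain ⟨tstar, ht⟩ := hA K hK x hx
  obtain ⟨t, hne, heq⟩ := (hfreq.and_eventually (eventually_atTop.2 ⟨tstar, ht⟩)).exists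
  exact hne heq

theorem breadth_implies_angluin_existence
    (U : Type) [Countable U] [Infinite U]
    (L : ℕ → Set U) (hL : ∀ i, (L i).Infinite)
    (h : ∃ A : List U → ℕ → U, GeneratesWithBreadth A (Set.range L)) :
    AngluinExistence (Set.range L) :=
  breadth_implies_angluin_existence_general U L hL h
end

section
/- Let C = {L_1, L_2, ...} be a countable collection of infinite languages over U. Suppose that for each index i there is a finite set T_i ⊆ L_i such that every L' ∈ C with T_i ⊆ L' and L' ⊊ L_i satisfies |L_i \ L'| < ∞, together with a nondecreasing sequence of finite sets T_i^{(1)} ⊆ T_i^{(2)} ⊆ ... whose union over n is T_i. Consider the algorithm which, at time n with input prefix having distinct-string set S_n, forms the index set C_n = {i : 1 ≤ i ≤ n, S_n ⊆ L_i, and T_i^{(n)} ⊆ S_n}; if C_n ≠ ∅ it lets g = min C_n and sets its generator G_n to enumerate L_g (so Z_{≥n} = L_g), and otherwise sets G_n arbitrarily. This algorithm exhaustively generates in the limit from C. -/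
/-- The algorithm `A` exhaustively generates in the limit from the collection `C`. -/
def ExhaustivelyGenerates {U : Type} (A : List U → ℕ → U) (C : Set (Set U)) : Prop :=
  ∀ K ∈ C, ∀ x : ℕ → U, IsEnumerationOf K x →
    ∃ tstar : ℕ, ∀ t : ℕ, tstar ≤ t →
      (ZgeSet A x t \ K).Finite ∧ K ⊆ seen x t ∪ ZltSet A x t ∪ ZgeSet A x t

/-- Weak Angluin's Condition with Existence: every L ∈ C has a finite tell-tale
T ⊆ L such that every L' ∈ C with T ⊆ L' and L' ⊊ L satisfies |L \ L'| < ∞. -/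
def WeakAngluinExistence {U : Type} (C : Set (Set U)) : Prop :=
  ∀ L ∈ C, ∃ T : Set U, T.Finite ∧ T ⊆ L ∧
    ∀ L' ∈ C, T ⊆ L' → L' ⊂ L → (L \ L').Finite

/-- The index set `C_n` computed by the algorithm from an input prefix `l`
(of length `n`): indices `i < n` with `S_n ⊆ L_i` and `T_i^{(n)} ⊆ S_n`. -/
def Cidx {U : Type} (L : ℕ → Set U) (Tn : ℕ → ℕ → Set U) (l : List U) : Set ℕ :=
  {i : ℕ | i < l.length ∧ {u | u ∈ l} ⊆ L i ∧ Tn i l.length ⊆ {u | u ∈ l}}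

open Filter

section Enumeration

variable {U : Type} {K : Set U} {x : ℕ → U}

lemma inputList_length (x : ℕ → U) (t : ℕ) : (inputList x t).length = t :=
  List.length_ofFn

lemma setOf_mem_inputList (x : ℕ → U) (t : ℕ) : {u | u ∈ inputList x t} = seen x t := by
  ext u
  simp [inputList, seen, List.mem_ofFn, Fin.exists_iff, eq_comm]

lemma IsEnumerationOf.seen_subset (hx : IsEnumerationOf K x) (t : ℕ) : seen x t ⊆ K := by
  rintro _ ⟨i, -, rfl⟩
  exact hx.1 i

lemma IsEnumerationOf.eventually_mem_seen (hx : IsEnumerationOf K x) {w : U} (hw : w ∈ K) :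
    ∀ᶠ t in atTop, w ∈ seen x t := by
  obtain ⟨s, rfl⟩ := hx.2 w hw
  exact eventually_atTop.2 ⟨s + 1, fun t ht => ⟨s, ht, rfl⟩⟩

lemma IsEnumerationOf.eventually_subset_seen (hx : IsEnumerationOf K x) {F : Set U}
    (hF : F.Finite) (hFK : F ⊆ K) : ∀ᶠ t in atTop, F ⊆ seen x t :=
  (hF.eventually_all.2 fun _ hw => hx.eventually_mem_seen (hFK hw)).mono fun _ h _ hw => h _ hw

end Enumeration

section MinIndex

variable {U : Type} {L : ℕ → Set U} {Tn : ℕ → ℕ → Set U} {x : ℕ → U} {K : Set U} {i : ℕ}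

lemma mem_Cidx_inputList_iff {t : ℕ} :
    i ∈ Cidx L Tn (inputList x t) ↔ i < t ∧ seen x t ⊆ L i ∧ Tn i t ⊆ seen x t := by
  simp only [Cidx, Set.mem_ofPred_eq, inputList_length, setOf_mem_inputList]

lemma eventually_mem_Cidx (hx : IsEnumerationOf K x) (hKi : K ⊆ L i)
    (hfin : (⋃ n, Tn i n).Finite) (hTK : ⋃ n, Tn i n ⊆ K) :
    ∀ᶠ t in atTop, i ∈ Cidx L Tn (inputList x t) := by
  filter_upwards [eventually_gt_atTop i, hx.eventually_subset_seen hfin hTK] with t hit hseen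
  exact mem_Cidx_inputList_iff.2
    ⟨hit, (hx.seen_subset t).trans hKi, (Set.subset_iUnion (Tn i) t).trans hseen⟩

lemma eventually_notMem_Cidx (hx : IsEnumerationOf K x) (hmono : Monotone (Tn i))
    (hi : ¬(K ⊆ L i ∧ ⋃ n, Tn i n ⊆ K)) :
    ∀ᶠ t in atTop, i ∉ Cidx L Tn (inputList x t) := by
  simp only [mem_Cidx_inputList_iff, not_and]
  by_cases hKi : K ⊆ L i
  · obtain ⟨u, huT, huK⟩ := Set.not_subset.1 fun h => hi ⟨hKi, h⟩
    obtain ⟨n, hun⟩ := Set.mem_iUnion.1 huT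
    filter_upwards [eventually_ge_atTop n] with t hnt _ _ hTseen
    exact huK (hx.seen_subset t (hTseen (hmono hnt hun)))
  · obtain ⟨w, hwK, hwi⟩ := Set.not_subset.1 hKi
    filter_upwards [hx.eventually_mem_seen hwK] with t hwt _ hseen
    exact absurd (hseen hwt) hwi

lemma eventually_isLeast_Cidx (hx : IsEnumerationOf K x) (hmono : ∀ i, Monotone (Tn i))
    {g : ℕ} (hKg : K ⊆ L g) (hfin : (⋃ n, Tn g n).Finite) (hTK : ⋃ n, Tn g n ⊆ K)
    (hmin : ∀ i < g, ¬(K ⊆ L i ∧ ⋃ n, Tn i n ⊆ K)) :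
    ∀ᶠ t in atTop, IsLeast (Cidx L Tn (inputList x t)) g := by
  have hbelow : ∀ᶠ t in atTop, ∀ i ∈ Set.Iio g, i ∉ Cidx L Tn (inputList x t) :=
    (Set.finite_Iio g).eventually_all.2 fun i hi => eventually_notMem_Cidx hx (hmono i) (hmin i hi)
  filter_upwards [eventually_mem_Cidx hx hKg hfin hTK, hbelow] with t hg hlt
  exact ⟨hg, fun i hi => not_lt.1 fun h => hlt i h hi⟩

end MinIndex

theorem min_index_telltale_algorithm_exhaustively_generates_general
    (U : Type)
    (L : ℕ → Set U)
    (T : ℕ → Set U) (hTfin : ∀ i, (T i).Finite) (hTsub : ∀ i, T i ⊆ L i)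
    (htell : ∀ i, ∀ L' ∈ Set.range L, T i ⊆ L' → L' ⊂ L i → (L i \ L').Finite)
    (Tn : ℕ → ℕ → Set U) (hTnmono : ∀ i, Monotone (Tn i))
    (hTnunion : ∀ i, (⋃ n, Tn i n) = T i)
    (A : List U → ℕ → U)
    (hA : ∀ l : List U, (Cidx L Tn l).Nonempty →
      Set.range (A l) = L (sInf (Cidx L Tn l))) :
    ExhaustivelyGenerates A (Set.range L) := by
  classical
  rintro K ⟨k, rfl⟩ x hx
  have hex : ∃ i, L k ⊆ L i ∧ T i ⊆ L k := ⟨k, subset_rfl, hTsub k⟩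
  set g := Nat.find hex
  obtain ⟨hKg, hTgK⟩ : L k ⊆ L g ∧ T g ⊆ L k := Nat.find_spec hex
  have hfin : (L g \ L k).Finite := by
    by_cases heq : L g = L k
    · simp [heq]
    · exact htell g (L k) ⟨k, rfl⟩ hTgK (hKg.ssubset_of_ne (Ne.symm heq))
  have hleast := eventually_isLeast_Cidx hx hTnmono hKg (hTnunion g ▸ hTfin g)
    (hTnunion g ▸ hTgK) fun i hi => hTnunion i ▸ Nat.find_min hex hi
  obtain ⟨tstar, htstar⟩ := hleast.exists_forall_of_atTop
  refine ⟨tstar, fun t ht => ?_⟩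
  have hZ : ZgeSet A x t = L g := by
    rw [ZgeSet, hA _ ⟨g, (htstar t ht).1⟩, (htstar t ht).csInf_eq]
  rw [hZ]
  exact ⟨hfin, hKg.trans Set.subset_union_right⟩

theorem min_index_telltale_algorithm_exhaustively_generates
    (U : Type) [Countable U] [Infinite U]
    (L : ℕ → Set U) (hL : ∀ i, (L i).Infinite)
    (T : ℕ → Set U) (hTfin : ∀ i, (T i).Finite) (hTsub : ∀ i, T i ⊆ L i)
    (htell : ∀ i, ∀ L' ∈ Set.range L, T i ⊆ L' → L' ⊂ L i → (L i \ L').Finite)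
    (Tn : ℕ → ℕ → Set U) (hTnmono : ∀ i, Monotone (Tn i))
    (hTnunion : ∀ i, (⋃ n, Tn i n) = T i)
    (A : List U → ℕ → U)
    (hA : ∀ l : List U, (Cidx L Tn l).Nonempty →
      Set.range (A l) = L (sInf (Cidx L Tn l))) :
    ExhaustivelyGenerates A (Set.range L) :=
  min_index_telltale_algorithm_exhaustively_generates_general U L T hTfin hTsub htell Tn hTnmono
    hTnunion A hA
end

section
/- Let U = ℤ, and for i ∈ ℤ let L_i = ℤ \ {i}, and for i < j in ℤ let L_{ij} = ℤ \ {i, j}; let C = {L_i : i ∈ ℤ} ∪ {L_{ij} : i, j ∈ ℤ, i < j}. Then the GF dimension of C is infinite (so C cannot be uniformly generated with feedback), yet there exists a generating algorithm that non-uniformly generates in the limit from C. -/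
/-- A generator strategy in the feedback model: `query h x` is the membership query
`y_t` issued after receiving input `x_t` with history `h` of completed rounds, and
`out h x y a` is the output `z_t` after the answer `a_t` to the query. -/
structure FGen (U : Type) where
  query : List (U × U × Bool × U) → U → U
  out : List (U × U × Bool × U) → U → U → Bool → U

/-- An adversary strategy in the feedback model: `inp h` is the next input `x_t`,
and `ans h x y` is the yes/no answer `a_t` to the generator's query `y_t`. -/
structure FAdv (U : Type) where
  inp : List (U × U × Bool × U) → U
  ans : List (U × U × Bool × U) → U → U → Bool

/-- The history of the first `t` completed rounds `(x_s, y_s, a_s, z_s)` of the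
interaction between `Adv` and `Gen`. -/
def fRun {U : Type} (Adv : FAdv U) (Gen : FGen U) : ℕ → List (U × U × Bool × U)
  | 0 => []
  | t + 1 =>
      let h := fRun Adv Gen t
      let x := Adv.inp h
      let y := Gen.query h x
      let a := Adv.ans h x y
      h ++ [(x, y, a, Gen.out h x y a)]

/-- The input `x_t` of round `t` (0-indexed) of the transcript T(Adv, Gen). -/
def fX {U : Type} (Adv : FAdv U) (Gen : FGen U) (t : ℕ) : U :=
  Adv.inp (fRun Adv Gen t)

/-- The generator's query `y_t` of round `t`. -/
def fY {U : Type} (Adv : FAdv U) (Gen : FGen U) (t : ℕ) : U :=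
  Gen.query (fRun Adv Gen t) (fX Adv Gen t)

/-- The adversary's answer `a_t` of round `t`. -/
def fA {U : Type} (Adv : FAdv U) (Gen : FGen U) (t : ℕ) : Bool :=
  Adv.ans (fRun Adv Gen t) (fX Adv Gen t) (fY Adv Gen t)

/-- The generator's output `z_t` of round `t`. -/
def fZ {U : Type} (Adv : FAdv U) (Gen : FGen U) (t : ℕ) : U :=
  Gen.out (fRun Adv Gen t) (fX Adv Gen t) (fY Adv Gen t) (fA Adv Gen t)

/-- `S_r`: the set of distinct inputs among the first `r` rounds. -/
def fS {U : Type} (Adv : FAdv U) (Gen : FGen U) (r : ℕ) : Set U :=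
  fX Adv Gen '' {t | t < r}

/-- The adversary strategy `Adv` is consistent with the language `K` (against `Gen`):
the inputs form an enumeration of `K` and every answer is truthful for `K`. -/
def fConsistent {U : Type} (Adv : FAdv U) (Gen : FGen U) (K : Set U) : Prop :=
  (∀ t, fX Adv Gen t ∈ K) ∧ (∀ w ∈ K, ∃ t, fX Adv Gen t = w) ∧
    ∀ t, fA Adv Gen t = true ↔ fY Adv Gen t ∈ K

/-- `C_r(T)`: the languages of `C` consistent with the transcript up to round `r`
(inputs belong to the language and all answers are truthful for it). -/
def fCons {U : Type} (C : Set (Set U)) (Adv : FAdv U) (Gen : FGen U) (r : ℕ) :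
    Set (Set U) :=
  {Lang ∈ C | ∀ t < r, fX Adv Gen t ∈ Lang ∧ (fA Adv Gen t = true ↔ fY Adv Gen t ∈ Lang)}

/-- The effective intersection `E_r(T)`. -/
def fE {U : Type} (C : Set (Set U)) (Adv : FAdv U) (Gen : FGen U) (r : ℕ) : Set U :=
  ⋂₀ fCons C Adv Gen r \ fS Adv Gen r

/-- The GF dimension of `C`: the supremum of all `d ∈ ℕ` such that for every
generator strategy there are `K ∈ C` and an adversary strategy consistent with `K`
whose transcript has a finite round `r ≥ d` with `|S_r| ≥ d` and `E_r(T) = ∅`. -/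
noncomputable def gfDim {U : Type} (C : Set (Set U)) : ℕ∞ :=
  sSup {e : ℕ∞ | ∃ d : ℕ, e = (d : ℕ∞) ∧
    ∀ Gen : FGen U, ∃ K ∈ C, ∃ Adv : FAdv U,
      fConsistent Adv Gen K ∧
      ∃ r : ℕ, d ≤ r ∧ d ≤ (fS Adv Gen r).ncard ∧ fE C Adv Gen r = ∅}

/-- `C` can be uniformly generated with feedback: some generator strategy `Gen` and
bound `t*` are such that against every adversary consistent with any `K ∈ C`, the
output of every round `t` with `|S_t| ≥ t*` lies in `K \ S_t` (here `S_t` counts the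
inputs up to and including round `t`). -/
def UniformGenWithFeedback {U : Type} (C : Set (Set U)) : Prop :=
  ∃ Gen : FGen U, ∃ tstar : ℕ,
    ∀ K ∈ C, ∀ Adv : FAdv U, fConsistent Adv Gen K →
      ∀ t : ℕ, tstar ≤ (fS Adv Gen (t + 1)).ncard →
        fZ Adv Gen t ∈ K \ fS Adv Gen (t + 1)

/-- The collection C = {ℤ \ {i} : i ∈ ℤ} ∪ {ℤ \ {i,j} : i < j}. -/
def Cex : Set (Set ℤ) :=
  (Set.range fun i : ℤ => ({i}ᶜ : Set ℤ)) ∪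
    {Lang | ∃ i j : ℤ, i < j ∧ Lang = ({i, j}ᶜ : Set ℤ)}


/-!
Against any generator, an adversary can spend `r` rounds feeding fresh strings while
answering every query "yes", making each query true by feeding it as the next input; only the
last query may have to be answered "no", and it is then the one excluded string `w`. Every
`ℤ \ {w, z}` with `z` unseen is consistent with such a transcript, so the effective
intersection is empty, and the adversary goes on to enumerate `ℤ \ {w}`. Since this works
for every `r`, the GF dimension is infinite. A uniform generator with threshold `t*` is refuted
at a round `r ≥ t*` with empty effective intersection: some consistent language misses its
output, and an adversary replaying the same rounds and then enumerating that language defeats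
it. Non-uniformly, outputting an integer of absolute value larger than all inputs and than
their number works as soon as more inputs than the largest excluded absolute value are seen.
-/

section Transcript

variable {U : Type} (A : FAdv U) (G : FGen U)

theorem fRun_succ (t : ℕ) :
    fRun A G (t + 1) = fRun A G t ++ [(fX A G t, fY A G t, fA A G t, fZ A G t)] :=
  rfl

@[simp]
theorem length_fRun (t : ℕ) : (fRun A G t).length = t := by
  induction t with
  | zero => rfl
  | succ t ih => simp [fRun_succ, ih]

theorem getLast?_fRun_succ (t : ℕ) :
    (fRun A G (t + 1)).getLast? = some (fX A G t, fY A G t, fA A G t, fZ A G t) := by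
  simp [fRun_succ]

theorem fS_succ (t : ℕ) : fS A G (t + 1) = insert (fX A G t) (fS A G t) := by
  have hIio : {s | s < t + 1} = insert t {s | s < t} := by
    ext s
    exact Nat.lt_succ_iff_lt_or_eq.trans or_comm
  rw [fS, fS, hIio, Set.image_insert_eq]

theorem fS_mono {s t : ℕ} (h : s ≤ t) : fS A G s ⊆ fS A G t :=
  Set.image_mono fun _ hi => lt_of_lt_of_le hi h

theorem fS_finite (t : ℕ) : (fS A G t).Finite :=
  (Set.finite_Iio t).image _

theorem mem_map_fst_fRun {w : U} {t : ℕ} :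
    w ∈ (fRun A G t).map Prod.fst ↔ w ∈ fS A G t := by
  induction t with
  | zero => simp [fRun, fS]
  | succ t ih => simp [fRun_succ, fS_succ, ih, or_comm]

theorem ncard_fS_of_forall_notMem (h : ∀ t, fX A G t ∉ fS A G t) (t : ℕ) :
    (fS A G t).ncard = t := by
  induction t with
  | zero => simp [fS]
  | succ t ih => rw [fS_succ, Set.ncard_insert_of_notMem (h t) (fS_finite A G t), ih]

end Transcript

theorem exists_isEnumerationOf_s18 {U : Type} {L : Set U} (hc : L.Countable) (hne : L.Nonempty) :
    ∃ e, IsEnumerationOf L e := by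
  obtain ⟨e, rfl⟩ := hc.exists_eq_range hne
  exact ⟨e, fun t => ⟨t, rfl⟩, fun _ ⟨t, ht⟩ => ⟨t, ht⟩⟩

def ForcesEmptyIntersection {U : Type} (C : Set (Set U)) (d : ℕ) : Prop :=
  ∀ Gen : FGen U, ∃ K ∈ C, ∃ Adv : FAdv U,
    fConsistent Adv Gen K ∧
    ∃ r : ℕ, d ≤ r ∧ d ≤ (fS Adv Gen r).ncard ∧ fE C Adv Gen r = ∅

theorem gfDim_eq_top_iff {U : Type} {C : Set (Set U)} :
    gfDim C = ⊤ ↔ ∀ n : ℕ, ∃ d, n ≤ d ∧ ForcesEmptyIntersection C d := by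
  rw [gfDim, sSup_eq_top]
  constructor
  · intro h n
    obtain ⟨_, ⟨d, rfl, hd⟩, hnd⟩ := h n (ENat.natCast_lt_top n)
    exact ⟨d, (Nat.cast_lt.mp hnd).le, hd⟩
  · intro h b hb
    obtain ⟨n, rfl⟩ := WithTop.ne_top_iff_exists.mp hb.ne
    obtain ⟨d, hnd, hd⟩ := h (n + 1)
    exact ⟨d, ⟨d, rfl, hd⟩, Nat.cast_lt.mpr (by omega)⟩

section ThenEnumerate

variable {U : Type}

open Classical in
noncomputable def FAdv.thenEnumerate (A : FAdv U) (r : ℕ) (e : ℕ → U) (L : Set U) :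
    FAdv U where
  inp h := if h.length < r then A.inp h else e (h.length - r)
  ans h x y := if h.length < r then A.ans h x y else decide (y ∈ L)

variable (A : FAdv U) (G : FGen U) {r : ℕ} {e : ℕ → U} {L : Set U} {t : ℕ}

local notation "B" => A.thenEnumerate r e L

theorem thenEnumerate_inp_of_lt {h : List (U × U × Bool × U)} (hl : h.length < r) :
    (B).inp h = A.inp h :=
  if_pos hl

theorem thenEnumerate_ans_of_lt {h : List (U × U × Bool × U)} (hl : h.length < r) :
    (B).ans h = A.ans h := by
  funext x y
  exact if_pos hl

theorem fRun_thenEnumerate (ht : t ≤ r) : fRun B G t = fRun A G t := by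
  induction t with
  | zero => rfl
  | succ t ih =>
    have hl : (fRun A G t).length < r := by rw [length_fRun]; exact ht
    simp only [fRun_succ, fX, fY, fA, fZ, ih (Nat.le_of_succ_le ht),
      thenEnumerate_inp_of_lt A hl, thenEnumerate_ans_of_lt A hl]

theorem fX_thenEnumerate_of_lt (ht : t < r) : fX B G t = fX A G t := by
  rw [fX, fX, fRun_thenEnumerate A G ht.le, thenEnumerate_inp_of_lt A (by rwa [length_fRun])]

theorem fY_thenEnumerate_of_lt (ht : t < r) : fY B G t = fY A G t := by
  rw [fY, fY, fRun_thenEnumerate A G ht.le, fX_thenEnumerate_of_lt A G ht]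

theorem fA_thenEnumerate_of_lt (ht : t < r) : fA B G t = fA A G t := by
  rw [fA, fA, fRun_thenEnumerate A G ht.le, fX_thenEnumerate_of_lt A G ht,
    fY_thenEnumerate_of_lt A G ht, thenEnumerate_ans_of_lt A (by rwa [length_fRun])]

theorem fZ_thenEnumerate_of_lt (ht : t < r) : fZ B G t = fZ A G t := by
  rw [fZ, fZ, fRun_thenEnumerate A G ht.le, fX_thenEnumerate_of_lt A G ht,
    fY_thenEnumerate_of_lt A G ht, fA_thenEnumerate_of_lt A G ht]

theorem fX_thenEnumerate_of_le (ht : r ≤ t) : fX B G t = e (t - r) := by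
  rw [fX]
  simp only [FAdv.thenEnumerate, length_fRun, if_neg (not_lt.mpr ht)]

theorem fA_thenEnumerate_of_le (ht : r ≤ t) : fA B G t = true ↔ fY B G t ∈ L := by
  rw [fA]
  simp only [FAdv.thenEnumerate, length_fRun, if_neg (not_lt.mpr ht), decide_eq_true_iff]

theorem fS_thenEnumerate : fS B G r = fS A G r :=
  Set.image_congr fun _ ht => fX_thenEnumerate_of_lt A G ht

theorem fE_thenEnumerate (C : Set (Set U)) : fE C B G r = fE C A G r := by
  have hCons : fCons C B G r = fCons C A G r := by
    ext K
    simp +contextual only [fCons, Set.mem_sep_iff, fX_thenEnumerate_of_lt,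
      fY_thenEnumerate_of_lt, fA_thenEnumerate_of_lt]
  rw [fE, fE, hCons, fS_thenEnumerate]

theorem fConsistent_thenEnumerate
    (hA : ∀ t < r, fX A G t ∈ L ∧ (fA A G t = true ↔ fY A G t ∈ L))
    (he : IsEnumerationOf L e) : fConsistent B G L := by
  refine ⟨fun t => ?_, fun w hw => ?_, fun t => ?_⟩
  · rcases lt_or_ge t r with ht | ht
    · rw [fX_thenEnumerate_of_lt A G ht]; exact (hA t ht).1
    · rw [fX_thenEnumerate_of_le A G ht]; exact he.1 _
  · obtain ⟨n, rfl⟩ := he.2 w hw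
    exact ⟨r + n, by rw [fX_thenEnumerate_of_le A G (by omega), Nat.add_sub_cancel_left]⟩
  · rcases lt_or_ge t r with ht | ht
    · rw [fA_thenEnumerate_of_lt A G ht, fY_thenEnumerate_of_lt A G ht]; exact (hA t ht).2
    · exact fA_thenEnumerate_of_le A G ht

end ThenEnumerate

theorem not_uniformGenWithFeedback_of_gfDim_eq_top {U : Type} [Countable U]
    {C : Set (Set U)} (h : gfDim C = ⊤) : ¬ UniformGenWithFeedback C := by
  rintro ⟨G, tstar, hU⟩
  obtain ⟨d, hd, hforce⟩ := gfDim_eq_top_iff.mp h (tstar + 1)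
  obtain ⟨K, hK, A, hA, r, hdr, hdS, hE⟩ := hforce G
  obtain ⟨t, rfl⟩ : ∃ t, r = t + 1 := ⟨r - 1, by omega⟩
  have hcard : tstar ≤ (fS A G (t + 1)).ncard := by omega
  have hzS : fZ A G t ∉ fS A G (t + 1) := (hU K hK A hA t hcard).2
  obtain ⟨L, hL, hzL⟩ : ∃ L ∈ fCons C A G (t + 1), fZ A G t ∉ L := by
    by_contra! hall
    have hzE : fZ A G t ∈ fE C A G (t + 1) := ⟨Set.mem_sInter.mpr hall, hzS⟩
    simp [hE] at hzE
  obtain ⟨e, he⟩ := exists_isEnumerationOf_s18 L.to_countable ⟨_, (hL.2 0 (by omega)).1⟩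
  have hB := hU L hL.1 (A.thenEnumerate (t + 1) e L) (fConsistent_thenEnumerate A G hL.2 he) t
    (by rwa [fS_thenEnumerate])
  rw [fZ_thenEnumerate_of_lt A G (Nat.lt_succ_self t)] at hB
  exact hzL hB.1

section PairComplements

variable {U : Type} {C : Set (Set U)} {A : FAdv U} {G : FGen U} {r : ℕ} {w : U}

theorem pair_compl_round_consistent {z : U} (hwS : w ∉ fS A G r) (hzS : z ∉ fS A G r)
    (hyes : ∀ t < r, fA A G t = true → fY A G t ∈ fS A G r)
    (hno : ∀ t < r, fA A G t = false → fY A G t = w) :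
    ∀ t < r, fX A G t ∈ ({w, z} : Set U)ᶜ ∧
      (fA A G t = true ↔ fY A G t ∈ ({w, z} : Set U)ᶜ) := by
  have hS : ∀ u ∈ fS A G r, u ∈ ({w, z} : Set U)ᶜ := by
    rintro u hu (rfl | rfl) <;> contradiction
  intro t ht
  refine ⟨hS _ ⟨t, ht, rfl⟩, ?_⟩
  cases hA : fA A G t
  · simp [hno t ht hA]
  · simp [hS _ (hyes t ht hA)]

theorem fE_eq_empty_of_pair_compl_mem (hC : ∀ z, ({w, z} : Set U)ᶜ ∈ C)
    (hwS : w ∉ fS A G r) (hyes : ∀ t < r, fA A G t = true → fY A G t ∈ fS A G r)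
    (hno : ∀ t < r, fA A G t = false → fY A G t = w) : fE C A G r = ∅ := by
  refine Set.eq_empty_of_forall_notMem fun z ⟨hz, hzS⟩ => ?_
  have hL : ({w, z} : Set U)ᶜ ∈ fCons C A G r :=
    ⟨hC z, pair_compl_round_consistent hwS hzS hyes hno⟩
  exact Set.mem_sInter.mp hz _ hL (Or.inr rfl)

end PairComplements

section Probe

variable {U : Type} [Infinite U]

noncomputable def freshOf (l : List U) : U :=
  l.finite_toSet.infinite_compl.nonempty.some

theorem freshOf_notMem (l : List U) : freshOf l ∉ l :=
  l.finite_toSet.infinite_compl.nonempty.some_mem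

open Classical in
/-- All inputs are distinct and the query of round `t` is among the inputs of the first `t + 2`
rounds, so the "yes" answers before round `r - 1` are true for every language containing the
inputs. -/
noncomputable def FAdv.probe (r : ℕ) : FAdv U where
  inp h :=
    match h.getLast? with
    | some (_, y, _, _) => if y ∈ h.map Prod.fst then freshOf (h.map Prod.fst) else y
    | none => freshOf (h.map Prod.fst)
  ans h x y := decide (h.length + 1 < r ∨ y ∈ h.map Prod.fst ∨ y = x)

variable (G : FGen U) (r : ℕ)

theorem probe_inp_notMem (h : List (U × U × Bool × U)) :
    (FAdv.probe r).inp h ∉ h.map Prod.fst := by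
  simp only [FAdv.probe]
  split
  · split_ifs with hy
    · exact freshOf_notMem _
    · exact hy
  · exact freshOf_notMem _

theorem fX_probe_notMem_fS (t : ℕ) : fX (FAdv.probe r) G t ∉ fS (FAdv.probe r) G t := by
  rw [← mem_map_fst_fRun]
  exact probe_inp_notMem r _

theorem probe_inp_of_getLast? {h : List (U × U × Bool × U)} {x y z : U} {a : Bool}
    (hl : h.getLast? = some (x, y, a, z)) (hy : y ∉ h.map Prod.fst) :
    (FAdv.probe r).inp h = y := by
  simp only [FAdv.probe, hl, if_neg hy]

theorem probe_ans_eq_true {h : List (U × U × Bool × U)} {x y : U} :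
    (FAdv.probe r).ans h x y = true ↔ h.length + 1 < r ∨ y ∈ h.map Prod.fst ∨ y = x := by
  simp only [FAdv.probe, decide_eq_true_iff]

theorem fY_probe_mem_fS (t : ℕ) :
    fY (FAdv.probe r) G t ∈ fS (FAdv.probe r) G (t + 2) := by
  by_cases hy : fY (FAdv.probe r) G t ∈ fS (FAdv.probe r) G (t + 1)
  · exact fS_mono _ G (Nat.le_succ _) hy
  · have hx : fX (FAdv.probe r) G (t + 1) = fY (FAdv.probe r) G t :=
      probe_inp_of_getLast? r (getLast?_fRun_succ _ G t) (mt (mem_map_fst_fRun _ G).mp hy)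
    rw [fS_succ, hx]
    exact Set.mem_insert _ _

theorem fA_probe (t : ℕ) :
    fA (FAdv.probe r) G t = true ↔
      t + 1 < r ∨ fY (FAdv.probe r) G t ∈ fS (FAdv.probe r) G (t + 1) := by
  rw [fA, probe_ans_eq_true, length_fRun, mem_map_fst_fRun, fS_succ,
    Set.mem_insert_iff]
  tauto

end Probe

theorem exists_probe_excluded {U : Type} [Infinite U] (G : FGen U) (d : ℕ) :
    ∃ w ∉ fS (FAdv.probe (d + 1)) G (d + 1),
      (∀ t < d + 1, fA (FAdv.probe (d + 1)) G t = true →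
        fY (FAdv.probe (d + 1)) G t ∈ fS (FAdv.probe (d + 1)) G (d + 1)) ∧
      (∀ t < d + 1, fA (FAdv.probe (d + 1)) G t = false → fY (FAdv.probe (d + 1)) G t = w) := by
  set P : FAdv U := FAdv.probe (d + 1)
  obtain ⟨w, hwS, hw⟩ : ∃ w ∉ fS P G (d + 1), fA P G d = false → fY P G d = w := by
    by_cases ha : fA P G d = true
    · obtain ⟨w, hw⟩ := (fS_finite P G (d + 1)).infinite_compl.nonempty
      exact ⟨w, hw, by simp [ha]⟩
    · exact ⟨fY P G d, fun hy => ha ((fA_probe G _ d).mpr (Or.inr hy)), fun _ => rfl⟩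
  refine ⟨w, hwS, fun t ht hA => ?_, fun t ht hA => ?_⟩
  · rcases (fA_probe G _ t).mp hA with h | h
    · exact fS_mono P G (by omega) (fY_probe_mem_fS G _ t)
    · exact fS_mono P G (by omega) h
  · obtain rfl : t = d := by
      by_contra hne
      have hyes := (fA_probe G (d + 1) t).mpr (Or.inl (by omega))
      rw [hA] at hyes
      exact Bool.false_ne_true hyes
    exact hw hA

theorem forcesEmptyIntersection_of_pair_compl_mem {U : Type} [Infinite U] [Countable U]
    {C : Set (Set U)} (hC : ∀ a b : U, ({a, b} : Set U)ᶜ ∈ C) (d : ℕ) :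
    ForcesEmptyIntersection C d := by
  intro G
  set P : FAdv U := FAdv.probe (d + 1)
  obtain ⟨w, hwS, hyes, hno⟩ := exists_probe_excluded G d
  have hK : ∀ t < d + 1, fX P G t ∈ ({w} : Set U)ᶜ ∧
      (fA P G t = true ↔ fY P G t ∈ ({w} : Set U)ᶜ) := by
    simpa using pair_compl_round_consistent hwS hwS hyes hno
  obtain ⟨e, he⟩ := exists_isEnumerationOf_s18 (Set.to_countable {w}ᶜ)
    (Set.finite_singleton w).infinite_compl.nonempty
  refine ⟨{w}ᶜ, by simpa using hC w w, P.thenEnumerate (d + 1) e {w}ᶜ,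
    fConsistent_thenEnumerate P G hK he, d + 1, by omega, ?_, ?_⟩
  · rw [fS_thenEnumerate, ncard_fS_of_forall_notMem P G (fX_probe_notMem_fS G _)]
    omega
  · rw [fE_thenEnumerate]
    exact fE_eq_empty_of_pair_compl_mem (hC w) hwS hyes hno

theorem gfDim_eq_top_of_pair_compl_mem {U : Type} [Infinite U] [Countable U]
    {C : Set (Set U)} (hC : ∀ a b : U, ({a, b} : Set U)ᶜ ∈ C) : gfDim C = ⊤ :=
  gfDim_eq_top_iff.mpr fun n => ⟨n, le_rfl, forcesEmptyIntersection_of_pair_compl_mem hC n⟩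

section Beyond

def beyondAll (l : List ℤ) : ℤ := (l.map Int.natAbs).sum + l.length + 1

theorem natAbs_beyondAll (l : List ℤ) :
    (beyondAll l).natAbs = (l.map Int.natAbs).sum + l.length + 1 := by
  unfold beyondAll
  omega

variable (x : ℕ → ℤ) (t : ℕ)

theorem ncard_seen_le : (seen x t).ncard ≤ t :=
  (Set.ncard_image_le (Set.finite_Iio t)).trans (Set.ncard_Iio_nat t).le

theorem natAbs_le_sum_of_mem_seen {w : ℤ} (hw : w ∈ seen x t) :
    w.natAbs ≤ ((inputList x t).map Int.natAbs).sum := by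
  obtain ⟨s, hs, rfl⟩ := hw
  exact List.le_sum_of_mem (List.mem_map_of_mem (List.mem_ofFn.mpr ⟨⟨s, hs⟩, rfl⟩))

theorem exists_beyondAll_mem_of_compl_finite {K : Set ℤ} (hK : Kᶜ.Finite) :
    ∃ tstar : ℕ, ∀ x : ℕ → ℤ, ∀ t : ℕ, tstar ≤ (seen x t).ncard →
      beyondAll (inputList x t) ∈ K \ seen x t := by
  obtain ⟨N, hN⟩ := (hK.image Int.natAbs).bddAbove
  refine ⟨N + 1, fun x t ht => ⟨by_contra fun hnot => ?_, fun hseen => ?_⟩⟩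
  · have h1 := hN ⟨_, hnot, rfl⟩
    have h2 := ncard_seen_le x t
    rw [natAbs_beyondAll, inputList, List.length_ofFn] at h1
    omega
  · have h1 := natAbs_le_sum_of_mem_seen x t hseen
    rw [natAbs_beyondAll] at h1
    omega

end Beyond

theorem pair_compl_mem_Cex (a b : ℤ) : ({a, b} : Set ℤ)ᶜ ∈ Cex := by
  rcases lt_trichotomy a b with h | rfl | h
  · exact Or.inr ⟨a, b, h, rfl⟩
  · exact Or.inl ⟨a, by rw [Set.pair_eq_singleton]⟩
  · exact Or.inr ⟨b, a, h, by rw [Set.pair_comm]⟩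

theorem compl_finite_of_mem_Cex {K : Set ℤ} (hK : K ∈ Cex) : Kᶜ.Finite := by
  rcases hK with ⟨i, rfl⟩ | ⟨i, j, -, rfl⟩ <;> simp

theorem cofinite_collection_example :
    gfDim Cex = ⊤ ∧ ¬ UniformGenWithFeedback Cex ∧
    ∃ A : List ℤ → ℤ, ∀ K ∈ Cex, ∃ tstar : ℕ,
      ∀ x : ℕ → ℤ, IsEnumerationOf K x →
        ∀ t : ℕ, tstar ≤ (seen x t).ncard →
          A (inputList x t) ∈ K \ seen x t := by
  have hdim : gfDim Cex = ⊤ := gfDim_eq_top_of_pair_compl_mem pair_compl_mem_Cex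
  refine ⟨hdim, not_uniformGenWithFeedback_of_gfDim_eq_top hdim, beyondAll, fun K hK => ?_⟩
  obtain ⟨tstar, htstar⟩ := exists_beyondAll_mem_of_compl_finite (compl_finite_of_mem_Cex hK)
  exact ⟨tstar, fun x _ => htstar x⟩
end
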